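/- arXiv:2304.08596 — 3 statements merged into one kernel-verified Lean document; each statement's English description precedes it below -/
import Mathlib

section
/- For n ≥ 3, the linear map π : ℝ^{n×n} → ℝ³ given by π(X) = (X_{11}, X_{12}, Σ_{i=3}^n X_{ii}) maps SO(n) to a nonconvex set. In particular, the intersection of π(SO(n)) with the plane {x ∈ ℝ³ : x₃ = n−2} equals the circle {(cos θ, sin θ, n−2) : θ ∈ [0, 2π)}, which is not convex. -/
open Matrix

/-- The special orthogonal group `SO(n)`. -/
def SpecialOrthogonal (n : ℕ) : Set (Matrix (Fin n) (Fin n) ℝ) :=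
  {X | Xᵀ * X = 1 ∧ X.det = 1}

/-!
Write `n = 2 + m`. On the plane `x₃ = m` the trace of the lower-right `m × m` block of an
orthogonal matrix `X` is maximal, and since every entry of `X` is at most `1` this forces
`X i i = 1` for `i ≥ 2`; a column of norm one with a diagonal entry `1` is a standard basis
vector, so the first row of `X` is `(X₁₁, X₁₂, 0, …, 0)` and `X₁₁² + X₁₂² = 1`. Conversely the
block matrix `diag(R_θ, I_m)` realizes every point `(cos θ, sin θ, m)`. The slice is therefore a
circle, which is not convex, and a convex set would have a convex slice.
-/

open Finset Real

lemma Real.exists_cos_eq_sin_eq_of_sq_add_sq_eq_one {a b : ℝ} (h : a ^ 2 + b ^ 2 = 1) :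
    ∃ θ : ℝ, cos θ = a ∧ sin θ = b := by
  have hz : ‖(⟨a, b⟩ : ℂ)‖ = 1 := by
    rw [Complex.norm_def, Complex.normSq_mk, ← sq, ← sq, h, Real.sqrt_one]
  obtain ⟨θ, hθ⟩ := (Complex.norm_eq_one_iff _).mp hz
  exact ⟨θ, by simpa using congrArg Complex.re hθ, by simpa using congrArg Complex.im hθ⟩

lemma Fin.sum_filter_le_val {M : Type*} [AddCommMonoid M] (a m : ℕ) (f : Fin (a + m) → M) :
    ∑ i ∈ univ.filter (fun i : Fin (a + m) => a ≤ i.val), f i =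
      ∑ i : Fin m, f (Fin.natAdd a i) := by
  rw [sum_filter, Fin.sum_univ_add]
  simp [fun i : Fin a => not_le.mpr i.is_lt]

def horizontalCircle (c : ℝ) : Set (ℝ × ℝ × ℝ) :=
  {x | ∃ θ : ℝ, x = (cos θ, sin θ, c)}

lemma not_convex_horizontalCircle (c : ℝ) : ¬ Convex ℝ (horizontalCircle c) := by
  intro h
  obtain ⟨θ, hθ⟩ := h (x := (1, 0, c)) (y := (-1, 0, c)) ⟨0, by simp⟩ ⟨π, by simp⟩
    (a := 1 / 2) (b := 1 / 2) (by norm_num) (by norm_num) (by norm_num)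
  have hcos : cos θ = 0 := by simpa using (congrArg Prod.fst hθ).symm
  have hsin : sin θ = 0 := by simpa using (congrArg (·.2.1) hθ).symm
  simpa [hcos, hsin] using sin_sq_add_cos_sq θ

namespace Matrix

section Orthogonal

variable {ι : Type*} [Fintype ι] [DecidableEq ι] {X : Matrix ι ι ℝ}

lemma sum_sq_col_eq_one (hX : Xᵀ * X = 1) (j : ι) : ∑ k, X k j ^ 2 = 1 := by
  simpa [mul_apply, sq] using congrFun (congrFun hX j) j

lemma sum_sq_row_eq_one (hX : Xᵀ * X = 1) (i : ι) : ∑ k, X i k ^ 2 = 1 := by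
  simpa [mul_apply, sq] using congrFun (congrFun (mul_eq_one_comm.mp hX : X * Xᵀ = 1) i) i

lemma apply_le_one_of_transpose_mul_self (hX : Xᵀ * X = 1) (i j : ι) : X i j ≤ 1 := by
  have : X i j ^ 2 ≤ 1 := sum_sq_col_eq_one hX j ▸
    single_le_sum (f := fun k => X k j ^ 2) (fun k _ => sq_nonneg _) (mem_univ i)
  nlinarith

lemma apply_eq_zero_of_diag_eq_one (hX : Xᵀ * X = 1) {j : ι} (hj : X j j = 1) {k : ι}
    (hk : k ≠ j) : X k j = 0 := by
  have hrest : ∑ k ∈ univ.erase j, X k j ^ 2 = 0 := by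
    have := add_sum_erase univ (fun k => X k j ^ 2) (mem_univ j)
    rw [sum_sq_col_eq_one hX, hj] at this
    linarith
  exact pow_eq_zero_iff two_ne_zero |>.mp <|
    (sum_eq_zero_iff_of_nonneg fun _ _ => sq_nonneg _).mp hrest k (mem_erase.mpr ⟨hk, mem_univ k⟩)

lemma diag_eq_one_of_sum_diag_eq_card (hX : Xᵀ * X = 1) {s : Finset ι}
    (hs : ∑ i ∈ s, X i i = #s) {i : ι} (hi : i ∈ s) : X i i = 1 := by
  have hdefect : ∑ i ∈ s, (1 - X i i) = 0 := by simp [sum_sub_distrib, hs]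
  have := (sum_eq_zero_iff_of_nonneg fun i _ =>
    sub_nonneg.mpr (apply_le_one_of_transpose_mul_self hX i i)).mp hdefect i hi
  linarith

lemma sq_add_sq_eq_one_of_diag_eq_one (hX : Xᵀ * X = 1) {a b : ι} (hab : a ≠ b)
    (hdiag : ∀ k, k ≠ a → k ≠ b → X k k = 1) : X a a ^ 2 + X a b ^ 2 = 1 := by
  rw [← sum_sq_row_eq_one hX a, Fintype.sum_eq_add a b hab]
  rintro k ⟨hka, hkb⟩
  rw [apply_eq_zero_of_diag_eq_one hX (hdiag k hka hkb) (Ne.symm hka), sq, zero_mul]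

end Orthogonal

section SpecialOrthogonalGroup

variable {R : Type*} [CommRing R] {m n : Type*} [Fintype m] [DecidableEq m] [Fintype n]
  [DecidableEq n]

lemma mem_specialOrthogonalGroup_iff_transpose {A : Matrix n n R} :
    A ∈ specialOrthogonalGroup n R ↔ Aᵀ * A = 1 ∧ A.det = 1 := by
  rw [mem_specialOrthogonalGroup_iff, mem_orthogonalGroup_iff']

lemma fromBlocks_mem_specialOrthogonalGroup {A : Matrix m m R} {D : Matrix n n R}
    (hA : A ∈ specialOrthogonalGroup m R) (hD : D ∈ specialOrthogonalGroup n R) :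
    fromBlocks A 0 0 D ∈ specialOrthogonalGroup (m ⊕ n) R := by
  rw [mem_specialOrthogonalGroup_iff_transpose] at *
  refine ⟨?_, ?_⟩
  · simp [fromBlocks_transpose, fromBlocks_multiply, hA.1, hD.1]
  · rw [det_fromBlocks_zero₂₁, hA.2, hD.2, one_mul]

lemma reindex_mem_specialOrthogonalGroup {A : Matrix m m R} (e : m ≃ n)
    (hA : A ∈ specialOrthogonalGroup m R) : reindex e e A ∈ specialOrthogonalGroup n R := by
  rw [mem_specialOrthogonalGroup_iff_transpose] at *
  refine ⟨?_, ?_⟩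
  · rw [transpose_reindex, reindex_apply, reindex_apply, submatrix_mul_equiv, hA.1,
      submatrix_one_equiv]
  · rw [det_reindex_self, hA.2]

end SpecialOrthogonalGroup

end Matrix

lemma specialOrthogonal_eq_specialOrthogonalGroup (n : ℕ) :
    SpecialOrthogonal n = specialOrthogonalGroup (Fin n) ℝ := by
  ext X
  exact mem_specialOrthogonalGroup_iff_transpose.symm

noncomputable def rotationMatrix (θ : ℝ) : Matrix (Fin 2) (Fin 2) ℝ :=
  !![cos θ, sin θ; -sin θ, cos θ]

lemma rotationMatrix_mem_specialOrthogonalGroup (θ : ℝ) :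
    rotationMatrix θ ∈ specialOrthogonalGroup (Fin 2) ℝ := by
  simp [rotationMatrix]

noncomputable def blockRotation (m : ℕ) (θ : ℝ) : Matrix (Fin (2 + m)) (Fin (2 + m)) ℝ :=
  reindex finSumFinEquiv finSumFinEquiv (fromBlocks (rotationMatrix θ) 0 0 1)

lemma blockRotation_mem_specialOrthogonal (m : ℕ) (θ : ℝ) :
    blockRotation m θ ∈ SpecialOrthogonal (2 + m) := by
  rw [specialOrthogonal_eq_specialOrthogonalGroup]
  exact reindex_mem_specialOrthogonalGroup _
    (fromBlocks_mem_specialOrthogonalGroup (rotationMatrix_mem_specialOrthogonalGroup θ)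
      (one_mem _))

lemma blockRotation_castAdd (m : ℕ) (θ : ℝ) (i j : Fin 2) :
    blockRotation m θ (Fin.castAdd m i) (Fin.castAdd m j) = rotationMatrix θ i j := by
  simp [blockRotation]

lemma blockRotation_natAdd_self (m : ℕ) (θ : ℝ) (i : Fin m) :
    blockRotation m θ (Fin.natAdd 2 i) (Fin.natAdd 2 i) = 1 := by
  simp [blockRotation]

/-- The map `π` of the paper, for `n = 2 + m`. -/
def traceProjection (m : ℕ) (X : Matrix (Fin (2 + m)) (Fin (2 + m)) ℝ) : ℝ × ℝ × ℝ :=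
  (X ⟨0, by omega⟩ ⟨0, by omega⟩, X ⟨0, by omega⟩ ⟨1, by omega⟩,
    ∑ i ∈ univ.filter (fun i : Fin (2 + m) => 2 ≤ i.val), X i i)

lemma traceProjection_blockRotation (m : ℕ) (θ : ℝ) :
    traceProjection m (blockRotation m θ) = (cos θ, sin θ, (m : ℝ)) := by
  refine Prod.ext (blockRotation_castAdd m θ 0 0) (Prod.ext (blockRotation_castAdd m θ 0 1) ?_)
  simp [traceProjection, Fin.sum_filter_le_val, blockRotation_natAdd_self]

lemma card_filter_two_le_val (m : ℕ) :
    #(univ.filter (fun i : Fin (2 + m) => 2 ≤ i.val)) = m := by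
  simpa using Fin.sum_filter_le_val 2 m (fun _ => (1 : ℕ))

lemma traceProjection_sq_add_sq_eq_one {m : ℕ} {X : Matrix (Fin (2 + m)) (Fin (2 + m)) ℝ}
    (hX : X ∈ SpecialOrthogonal (2 + m)) (htrace : (traceProjection m X).2.2 = m) :
    (traceProjection m X).1 ^ 2 + (traceProjection m X).2.1 ^ 2 = 1 := by
  have hs : ∑ i ∈ univ.filter (fun i : Fin (2 + m) => 2 ≤ i.val), X i i =
      #(univ.filter (fun i : Fin (2 + m) => 2 ≤ i.val)) := by
    rw [card_filter_two_le_val]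
    exact htrace
  refine sq_add_sq_eq_one_of_diag_eq_one hX.1 (by simp) fun k hk0 hk1 => ?_
  refine diag_eq_one_of_sum_diag_eq_card hX.1 hs ?_
  simp only [ne_eq, Fin.ext_iff, mem_filter, mem_univ, true_and] at hk0 hk1 ⊢
  omega

lemma image_traceProjection_inter_eq_horizontalCircle (m : ℕ) :
    traceProjection m '' SpecialOrthogonal (2 + m) ∩ {x | x.2.2 = m} = horizontalCircle m := by
  ext x
  constructor
  · rintro ⟨⟨X, hX, rfl⟩, htrace⟩
    obtain ⟨θ, hcos, hsin⟩ :=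
      exists_cos_eq_sin_eq_of_sq_add_sq_eq_one (traceProjection_sq_add_sq_eq_one hX htrace)
    exact ⟨θ, Prod.ext hcos.symm (Prod.ext hsin.symm htrace)⟩
  · rintro ⟨θ, rfl⟩
    exact ⟨⟨blockRotation m θ, blockRotation_mem_specialOrthogonal m θ,
      traceProjection_blockRotation m θ⟩, rfl⟩

/-- For `n ≥ 3`, the linear map `X ↦ (X₁₁, X₁₂, ∑_{i≥3} X_{ii})` maps `SO(n)`
to a nonconvex set; its intersection with the plane `x₃ = n - 2` is the
circle `{(cos θ, sin θ, n-2)}`, which is not convex. -/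
theorem three_dim_image_so_nonconvex (n : ℕ) (hn : 3 ≤ n) :
    ¬ Convex ℝ ((fun X : Matrix (Fin n) (Fin n) ℝ =>
        (X ⟨0, by omega⟩ ⟨0, by omega⟩, X ⟨0, by omega⟩ ⟨1, by omega⟩,
          ∑ i ∈ Finset.univ.filter (fun i : Fin n => 2 ≤ i.val), X i i))
        '' SpecialOrthogonal n) ∧
    ((fun X : Matrix (Fin n) (Fin n) ℝ =>
        (X ⟨0, by omega⟩ ⟨0, by omega⟩, X ⟨0, by omega⟩ ⟨1, by omega⟩,
          ∑ i ∈ Finset.univ.filter (fun i : Fin n => 2 ≤ i.val), X i i))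
        '' SpecialOrthogonal n) ∩ {x : ℝ × ℝ × ℝ | x.2.2 = (n : ℝ) - 2} =
      {x : ℝ × ℝ × ℝ | ∃ θ : ℝ, x = (Real.cos θ, Real.sin θ, (n : ℝ) - 2)} ∧
    ¬ Convex ℝ {x : ℝ × ℝ × ℝ | ∃ θ : ℝ, x = (Real.cos θ, Real.sin θ, (n : ℝ) - 2)} := by
  obtain ⟨m, rfl⟩ := Nat.exists_eq_add_of_le (by omega : 2 ≤ n)
  have hm : ((2 + m : ℕ) : ℝ) - 2 = m := by push_cast; ring
  rw [hm]
  have hslice := image_traceProjection_inter_eq_horizontalCircle m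
  have hplane : Convex ℝ {x : ℝ × ℝ × ℝ | x.2.2 = m} :=
    (convex_singleton (m : ℝ)).linear_preimage (LinearMap.snd ℝ ℝ ℝ ∘ₗ LinearMap.snd ℝ ℝ (ℝ × ℝ))
  exact ⟨fun hconv => not_convex_horizontalCircle m (hslice ▸ hconv.inter hplane), hslice,
    not_convex_horizontalCircle m⟩
end

section
/- Let A be a diagonal n×n real matrix with det(A) ≠ 0 and let σ be in the interior of π_T(B_op(n)). Then the maximizer of ⟨A, X⟩ over {X ∈ B_op(n) : π_T(X) = σ} is unique and lies in O(n); if moreover det(A) > 0, it lies in SO(n). -/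
open Matrix

/-- The ℓ²→ℓ² operator norm of a real matrix. -/
noncomputable def opNorm {m p : ℕ} (M : Matrix (Fin m) (Fin p) ℝ) : ℝ :=
  ‖LinearMap.toContinuousLinearMap (Matrix.toEuclideanLin (𝕜 := ℝ) M)‖

/-- The operator norm unit ball in `ℝ^{n×n}`. -/
noncomputable def opNormBall (n : ℕ) : Set (Matrix (Fin n) (Fin n) ℝ) :=
  {X | opNorm X ≤ 1}

/-- The projection of a matrix onto its strictly upper triangular entries. -/
def sutProj {n : ℕ} (X : Matrix (Fin n) (Fin n) ℝ) :
    {q : Fin n × Fin n // q.1 < q.2} → ℝ :=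
  fun q => X q.1.1 q.1.2

/-!
The constrained problem is a linear program over a convex body, and the interior assumption on
`σ` is Slater's condition, so there is a Lagrange multiplier `μ` for the constraint
`π_T X = σ`: every maximizer `X` also maximizes `⟨B, ·⟩` over the whole ball, where
`⟨B, Y⟩ = ⟨A, Y⟩ - μ (π_T Y)`. The correction is strictly upper triangular, so `B` is upper
triangular with the diagonal of `A`, hence `det B = det A ≠ 0`. For invertible `B` with polar
decomposition `B = Q P`, `⟨B, X⟩ = tr (P Qᵀ X) ≤ tr P` on the ball with equality only at
`X = Q`, so the maximizer is the orthogonal factor `Q`, whose determinant has the sign of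
`det B`.
-/

open Set
open scoped Matrix.Norms.L2Operator

theorem ContinuousLinearMap.apply_prod_mk {F : Type*} [AddCommGroup F] [Module ℝ F]
    [TopologicalSpace F] (f : F × ℝ →L[ℝ] ℝ) (τ : F) (t : ℝ) :
    f (τ, t) = f (τ, 0) + t * f (0, 1) := by
  rw [← smul_eq_mul, ← map_smul, ← map_add, Prod.smul_mk, smul_zero, smul_eq_mul, mul_one,
    Prod.mk_add_mk, add_zero, zero_add]

section LagrangeMultiplier

variable {E F : Type*} [NormedAddCommGroup E] [NormedSpace ℝ E] [FiniteDimensional ℝ E]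
  [NormedAddCommGroup F] [NormedSpace ℝ F] [FiniteDimensional ℝ F]

theorem LinearMap.mem_image_of_mem_interior_image_closure {U : Set E} (hUo : IsOpen U)
    (hUc : Convex ℝ U) {π : E →ₗ[ℝ] F} (hπ : Function.Surjective π) {σ : F}
    (hσ : σ ∈ interior (π '' closure U)) : σ ∈ π '' U := by
  have hopen : IsOpen (π '' U) := π.isOpenMap_of_finiteDimensional hπ U hUo
  have hne : (π '' U).Nonempty := by
    obtain ⟨y, hy, -⟩ := interior_subset hσ
    exact (closure_nonempty_iff.mp ⟨y, hy⟩).image π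
  have h := interior_mono (image_closure_subset_closure_image π.continuous_of_finiteDimensional) hσ
  rwa [(hUc.linear_image π).interior_closure_eq_interior_of_nonempty_interior
    (hopen.interior_eq.symm ▸ hne), hopen.interior_eq] at h

theorem exists_supporting_functional_of_constrained_max {U : Set E} (hUo : IsOpen U)
    (hUc : Convex ℝ U) (π : E →ₗ[ℝ] F) (φ : E →ₗ[ℝ] ℝ) {x : E}
    (hx : π x ∈ interior (π '' closure U))
    (hmax : ∀ y ∈ closure U, π y = π x → φ y ≤ φ x) :
    ∃ f : F × ℝ →L[ℝ] ℝ, f (0, 1) = -1 ∧ ∀ y ∈ closure U, f (π x, φ x) ≤ f (π y, φ y) := by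
  have hπ : Function.Surjective π := LinearMap.range_eq_top.mp <|
    Submodule.eq_top_of_nonempty_interior' _ ⟨_, interior_mono (image_subset_range _ _) hx⟩
  obtain ⟨y₀, hy₀, hy₀x⟩ := π.mem_image_of_mem_interior_image_closure hUo hUc hπ hx
  let T : E × ℝ →ₗ[ℝ] F × ℝ :=
    (π ∘ₗ LinearMap.fst ℝ E ℝ).prod (φ ∘ₗ LinearMap.fst ℝ E ℝ - LinearMap.snd ℝ E ℝ)
  have hT_apply : ∀ y s, T (y, s) = (π y, φ y - s) := fun _ _ => rfl
  have hT : Function.Surjective T := by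
    rintro ⟨τ, t⟩
    obtain ⟨y, rfl⟩ := hπ τ
    exact ⟨(y, φ y - t), by rw [hT_apply, sub_sub_cancel]⟩
  -- `T '' (U ×ˢ Ioi 0)` is the open set of points strictly below the graph of `φ` over `U`
  have hxC : (π x, φ x) ∉ T '' (U ×ˢ Ioi 0) := by
    rintro ⟨⟨y, s⟩, ⟨hy, hs : 0 < s⟩, hTy⟩
    rw [hT_apply, Prod.mk.injEq] at hTy
    linarith [hmax y (subset_closure hy) hTy.1, hTy.2]
  obtain ⟨f, hf⟩ := geometric_hahn_banach_point_open ((hUc.prod (convex_Ioi 0)).linear_image T)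
    (T.isOpenMap_of_finiteDimensional hT _ (hUo.prod isOpen_Ioi)) hxC
  -- the Slater point `y₀` forces the `φ`-component of `f` to be negative
  have hc : f (0, 1) < 0 := by
    have h := hf _ ⟨(y₀, 1), ⟨hy₀, mem_Ioi.mpr one_pos⟩, rfl⟩
    rw [hT_apply, hy₀x, f.apply_prod_mk (π x) (φ x), f.apply_prod_mk (π x) (φ y₀ - 1)] at h
    nlinarith [hmax y₀ (subset_closure hy₀) hy₀x]
  have hf_closure : ∀ z ∈ closure (U ×ˢ Ioi 0), f (π x, φ x) ≤ f (T z) :=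
    closure_minimal (fun z hz => (hf _ ⟨z, hz, rfl⟩).le)
      (isClosed_le continuous_const (f.continuous.comp T.continuous_of_finiteDimensional))
  rw [closure_prod_eq, closure_Ioi] at hf_closure
  refine ⟨(-f (0, 1))⁻¹ • f, by simp [hc.ne], fun y hy => ?_⟩
  have h := hf_closure (y, 0) ⟨hy, mem_Ici.mpr le_rfl⟩
  rw [hT_apply, sub_zero] at h
  simp only [_root_.smul_apply, smul_eq_mul]
  exact mul_le_mul_of_nonneg_left h (inv_nonneg.mpr (by linarith))

theorem exists_lagrange_multiplier {U : Set E} (hUo : IsOpen U) (hUc : Convex ℝ U)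
    (π : E →ₗ[ℝ] F) (φ : E →ₗ[ℝ] ℝ) {x : E}
    (hx : π x ∈ interior (π '' closure U))
    (hmax : ∀ y ∈ closure U, π y = π x → φ y ≤ φ x) :
    ∃ μ : F →ₗ[ℝ] ℝ, ∀ y ∈ closure U, φ y - μ (π y) ≤ φ x - μ (π x) := by
  obtain ⟨f, hf₁, hf⟩ := exists_supporting_functional_of_constrained_max hUo hUc π φ hx hmax
  refine ⟨f.toLinearMap ∘ₗ LinearMap.inl ℝ F ℝ, fun y hy => ?_⟩
  have h := hf y hy
  rw [f.apply_prod_mk (π x), f.apply_prod_mk (π y), hf₁] at h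
  simp only [LinearMap.comp_apply, LinearMap.inl_apply, ContinuousLinearMap.coe_coe]
  linarith

end LagrangeMultiplier

theorem EuclideanSpace.norm_toLp_sq {ι : Type*} [Fintype ι] (v : ι → ℝ) :
    ‖WithLp.toLp 2 v‖ ^ 2 = v ⬝ᵥ v := by
  rw [← real_inner_self_eq_norm_sq, EuclideanSpace.inner_toLp_toLp, star_trivial]

namespace Matrix

theorem PosSemidef.transpose_eq {ι : Type*} {P : Matrix ι ι ℝ} (hP : P.PosSemidef) : Pᵀ = P :=
  (isHermitian_iff_isSymm.mp hP.isHermitian).eq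

section Contraction

variable {ι : Type*} [Fintype ι]

theorem sub_dotProduct_sub_le {a b : ι → ℝ} (h : a ⬝ᵥ a ≤ b ⬝ᵥ b) :
    (a - b) ⬝ᵥ (a - b) ≤ 2 * (b ⬝ᵥ b - a ⬝ᵥ b) := by
  simp only [sub_dotProduct, dotProduct_sub, dotProduct_comm b a]
  linarith

theorem dotProduct_le_of_dotProduct_self_le {a b : ι → ℝ} (h : a ⬝ᵥ a ≤ b ⬝ᵥ b) :
    a ⬝ᵥ b ≤ b ⬝ᵥ b := by
  have := dotProduct_star_self_nonneg (a - b)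
  rw [star_trivial] at this
  linarith [sub_dotProduct_sub_le h]

theorem eq_of_dotProduct_self_le_of_dotProduct_eq {a b : ι → ℝ} (h : a ⬝ᵥ a ≤ b ⬝ᵥ b)
    (h' : a ⬝ᵥ b = b ⬝ᵥ b) : a = b := by
  have := dotProduct_star_self_nonneg (a - b)
  rw [star_trivial] at this
  exact sub_eq_zero.mp <| dotProduct_self_eq_zero.mp <|
    le_antisymm (by linarith [sub_dotProduct_sub_le h]) this

theorem mul_mul_transpose_apply_self (R M : Matrix ι ι ℝ) (i : ι) :
    (R * M * Rᵀ) i i = (M *ᵥ R i) ⬝ᵥ R i := by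
  rw [mul_mul_apply, transpose_transpose, dotProduct_comm]

theorem mul_transpose_apply_self (R : Matrix ι ι ℝ) (i : ι) : (R * Rᵀ) i i = R i ⬝ᵥ R i := by
  rw [mul_apply, dotProduct]
  rfl

variable [DecidableEq ι]

theorem mulVec_dotProduct_mulVec_le {M : Matrix ι ι ℝ} (hM : ‖M‖ ≤ 1) (v : ι → ℝ) :
    (M *ᵥ v) ⬝ᵥ (M *ᵥ v) ≤ v ⬝ᵥ v := by
  have h : ‖WithLp.toLp 2 (M *ᵥ v)‖ ≤ ‖WithLp.toLp 2 v‖ :=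
    (M.l2_opNorm_mulVec (WithLp.toLp 2 v)).trans (mul_le_of_le_one_left (norm_nonneg _) hM)
  rw [← EuclideanSpace.norm_toLp_sq, ← EuclideanSpace.norm_toLp_sq]
  gcongr

theorem mul_mul_transpose_apply_self_le (R : Matrix ι ι ℝ) {M : Matrix ι ι ℝ} (hM : ‖M‖ ≤ 1)
    (i : ι) : (R * M * Rᵀ) i i ≤ (R * Rᵀ) i i := by
  rw [mul_mul_transpose_apply_self, mul_transpose_apply_self]
  exact dotProduct_le_of_dotProduct_self_le (mulVec_dotProduct_mulVec_le hM _)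

theorem trace_mul_mul_transpose_le (R : Matrix ι ι ℝ) {M : Matrix ι ι ℝ} (hM : ‖M‖ ≤ 1) :
    (R * M * Rᵀ).trace ≤ (R * Rᵀ).trace :=
  Finset.sum_le_sum fun i _ => mul_mul_transpose_apply_self_le R hM i

theorem mul_transpose_eq_of_trace_mul_mul_transpose_eq (R : Matrix ι ι ℝ) {M : Matrix ι ι ℝ}
    (hM : ‖M‖ ≤ 1) (h : (R * M * Rᵀ).trace = (R * Rᵀ).trace) : M * Rᵀ = Rᵀ := by
  have hrow : ∀ i, M *ᵥ R i = R i := fun i => by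
    refine eq_of_dotProduct_self_le_of_dotProduct_eq (mulVec_dotProduct_mulVec_le hM _) ?_
    rw [← mul_mul_transpose_apply_self, ← mul_transpose_apply_self]
    exact (Finset.sum_eq_sum_iff_of_le fun i _ => mul_mul_transpose_apply_self_le R hM i).mp h i
      (Finset.mem_univ i)
  ext k i
  simpa [mul_apply, mulVec, dotProduct] using congrFun (hrow i) k

open scoped MatrixOrder in
theorem PosSemidef.exists_posSemidef_mul_self_eq {P : Matrix ι ι ℝ} (hP : P.PosSemidef) :
    ∃ R : Matrix ι ι ℝ, R.PosSemidef ∧ R * R = P :=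
  ⟨CFC.sqrt P, (CFC.sqrt_nonneg P).posSemidef, CFC.sqrt_mul_sqrt_self P hP.nonneg⟩

theorem PosSemidef.trace_mul_le {P M : Matrix ι ι ℝ} (hP : P.PosSemidef) (hM : ‖M‖ ≤ 1) :
    (P * M).trace ≤ P.trace := by
  obtain ⟨R, hR, rfl⟩ := hP.exists_posSemidef_mul_self_eq
  have h := trace_mul_mul_transpose_le R hM
  rwa [hR.transpose_eq, trace_mul_cycle] at h

theorem PosSemidef.eq_one_of_trace_mul_eq {P M : Matrix ι ι ℝ} (hP : P.PosSemidef)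
    (hdet : P.det ≠ 0) (hM : ‖M‖ ≤ 1) (h : (P * M).trace = P.trace) : M = 1 := by
  obtain ⟨R, hR, rfl⟩ := hP.exists_posSemidef_mul_self_eq
  have hRu : IsUnit R := (isUnit_iff_isUnit_det R).mpr <| isUnit_iff_ne_zero.mpr fun h0 => by
    simp [det_mul, h0] at hdet
  have h' := mul_transpose_eq_of_trace_mul_mul_transpose_eq R hM
    (by rwa [hR.transpose_eq, trace_mul_cycle])
  rw [hR.transpose_eq] at h'
  exact hRu.mul_right_cancel (h'.trans (one_mul R).symm)

theorem norm_transpose_mul_of_transpose_mul_self_eq_one {Q : Matrix ι ι ℝ} (hQ : Qᵀ * Q = 1)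
    (X : Matrix ι ι ℝ) : ‖Qᵀ * X‖ = ‖X‖ := by
  refine CStarRing.norm_mem_unitary_mul X ?_
  rw [Unitary.mem_iff, star_eq_conjTranspose, conjTranspose_eq_transpose_of_trivial,
    transpose_transpose]
  exact ⟨mul_eq_one_comm.mp hQ, hQ⟩

theorem norm_le_one_of_transpose_mul_self_eq_one {Q : Matrix ι ι ℝ} (hQ : Qᵀ * Q = 1) :
    ‖Q‖ ≤ 1 := by
  rw [← norm_transpose_mul_of_transpose_mul_self_eq_one hQ, hQ, cstar_norm_def, map_one]
  exact ContinuousLinearMap.norm_id_le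

theorem exists_polar_decomposition {B : Matrix ι ι ℝ} (hB : B.det ≠ 0) :
    ∃ Q P : Matrix ι ι ℝ, Qᵀ * Q = 1 ∧ P.PosSemidef ∧ P.det ≠ 0 ∧ B = Q * P := by
  obtain ⟨P, hP, hPP⟩ := (posSemidef_conjTranspose_mul_self B).exists_posSemidef_mul_self_eq
  rw [conjTranspose_eq_transpose_of_trivial] at hPP
  have hdetP : P.det ≠ 0 := fun h0 => hB (by simpa [det_mul, h0] using congrArg det hPP)
  have hPu : IsUnit P := (isUnit_iff_isUnit_det P).mpr (isUnit_iff_ne_zero.mpr hdetP)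
  obtain ⟨Q, hBQ⟩ : ∃ Q, B = Q * P :=
    ⟨B * P⁻¹, by rw [mul_assoc, nonsing_inv_mul _ ((isUnit_iff_isUnit_det P).mp hPu), mul_one]⟩
  refine ⟨Q, P, hPu.mul_left_cancel (hPu.mul_right_cancel ?_), hP, hdetP, hBQ⟩
  calc P * (Qᵀ * Q) * P = (Q * P)ᵀ * (Q * P) := by
        rw [transpose_mul, hP.transpose_eq]; simp only [mul_assoc]
    _ = P * 1 * P := by rw [← hBQ, ← hPP, mul_one]

theorem exists_orthogonal_unique_maximizer_trace {B : Matrix ι ι ℝ} (hB : B.det ≠ 0) :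
    ∃ Q : Matrix ι ι ℝ, Qᵀ * Q = 1 ∧ (0 < B.det → Q.det = 1) ∧
      ∀ X ∈ Metric.closedBall 0 1,
        IsMaxOn (fun Y => (Bᵀ * Y).trace) (Metric.closedBall 0 1) X → X = Q := by
  obtain ⟨Q, P, hQQ, hP, hdetP, rfl⟩ := exists_polar_decomposition hB
  have htrace : ∀ X, ((Q * P)ᵀ * X).trace = (P * (Qᵀ * X)).trace := fun X => by
    rw [transpose_mul, hP.transpose_eq, mul_assoc]
  refine ⟨Q, hQQ, fun hBpos => ?_, fun X hX hmax => ?_⟩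
  · have hdetQ : Q.det * Q.det = 1 := by simpa using congrArg det hQQ
    rw [det_mul] at hBpos
    nlinarith [lt_of_le_of_ne hP.det_nonneg (Ne.symm hdetP)]
  · have hQX : ‖Qᵀ * X‖ ≤ 1 := by
      rwa [norm_transpose_mul_of_transpose_mul_self_eq_one hQQ, ← mem_closedBall_zero_iff]
    have hmaxQ := isMaxOn_iff.mp hmax Q
      (mem_closedBall_zero_iff.mpr (norm_le_one_of_transpose_mul_self_eq_one hQQ))
    rw [htrace, htrace, hQQ, mul_one] at hmaxQ
    have h1 := hP.eq_one_of_trace_mul_eq hdetP hQX (le_antisymm (hP.trace_mul_le hQX) hmaxQ)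
    calc X = Q * (Qᵀ * X) := by rw [← mul_assoc, mul_eq_one_comm.mp hQQ, one_mul]
      _ = Q := by rw [h1, mul_one]

end Contraction

theorem IsUpperTriangular.det_eq_of_apply_eq {ι R : Type*} [Fintype ι] [DecidableEq ι]
    [LinearOrder ι] [CommRing R] {A B : Matrix ι ι R} (hA : A.IsUpperTriangular)
    (hBA : ∀ i j, j ≤ i → B i j = A i j) : B.det = A.det := by
  have hB : B.IsUpperTriangular := fun i j hji => (hBA i j hji.le).trans (hA hji)
  rw [det_of_isUpperTriangular hA, det_of_isUpperTriangular hB]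
  exact Finset.prod_congr rfl fun i _ => hBA i i le_rfl

theorem trace_transpose_mul_of_linearMap {m n R : Type*} [Fintype m] [Fintype n]
    [DecidableEq m] [DecidableEq n] [CommSemiring R] (Φ : Matrix m n R →ₗ[R] R)
    (Y : Matrix m n R) : ((of fun i j => Φ (single i j 1))ᵀ * Y).trace = Φ Y := by
  have hΦ : ∀ i j, Φ (single i j (Y i j)) = Φ (single i j 1) * Y i j := fun i j => by
    rw [mul_comm, ← smul_eq_mul, ← map_smul, smul_single, smul_eq_mul, mul_one]
  conv_rhs => rw [matrix_eq_sum_single Y]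
  simp only [map_sum, hΦ, trace, diag_apply, mul_apply, transpose_apply, of_apply]
  exact Finset.sum_comm

end Matrix

theorem opNormBall_eq_closedBall (n : ℕ) : opNormBall n = Metric.closedBall 0 1 := by
  ext X
  rw [mem_closedBall_zero_iff]
  rfl

def sutProjLinear (n : ℕ) :
    Matrix (Fin n) (Fin n) ℝ →ₗ[ℝ] ({q : Fin n × Fin n // q.1 < q.2} → ℝ) where
  toFun := sutProj
  map_add' _ _ := rfl
  map_smul' _ _ := rfl

theorem sutProjLinear_apply {n : ℕ} (X : Matrix (Fin n) (Fin n) ℝ) :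
    sutProjLinear n X = sutProj X :=
  rfl

theorem sutProj_single_of_le {n : ℕ} {i j : Fin n} (hji : j ≤ i) :
    sutProj (single i j (1 : ℝ)) = 0 := by
  funext q
  simp only [sutProj, single_apply, Pi.zero_apply, ite_eq_right_iff, and_imp]
  rintro rfl rfl
  exact absurd q.2 hji.not_gt

theorem exists_lagrangian_of_sutProj_constrained_max {n : ℕ} {A X : Matrix (Fin n) (Fin n) ℝ}
    (hA : A.IsUpperTriangular)
    (hσ : sutProj X ∈ interior (sutProj '' Metric.closedBall 0 1))
    (hmax : ∀ Y ∈ Metric.closedBall 0 1, sutProj Y = sutProj X →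
      (Aᵀ * Y).trace ≤ (Aᵀ * X).trace) :
    ∃ B : Matrix (Fin n) (Fin n) ℝ, B.det = A.det ∧
      IsMaxOn (fun Y => (Bᵀ * Y).trace) (Metric.closedBall 0 1) X ∧
      ∃ μ : ({q : Fin n × Fin n // q.1 < q.2} → ℝ) →ₗ[ℝ] ℝ,
        ∀ Y, (Bᵀ * Y).trace = (Aᵀ * Y).trace - μ (sutProj Y) := by
  rw [← closure_ball (0 : Matrix (Fin n) (Fin n) ℝ) one_ne_zero] at hσ hmax ⊢
  let φ : Matrix (Fin n) (Fin n) ℝ →ₗ[ℝ] ℝ := traceLinearMap _ ℝ ℝ ∘ₗ LinearMap.mulLeft ℝ Aᵀ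
  obtain ⟨μ, hμ⟩ :=
    exists_lagrange_multiplier Metric.isOpen_ball (convex_ball 0 1) (sutProjLinear n) φ hσ hmax
  let Φ := φ - μ ∘ₗ sutProjLinear n
  have hB (Y : Matrix (Fin n) (Fin n) ℝ) :
      ((of fun i j => Φ (single i j 1))ᵀ * Y).trace = (Aᵀ * Y).trace - μ (sutProj Y) :=
    trace_transpose_mul_of_linearMap Φ Y
  refine ⟨of fun i j => Φ (single i j 1), hA.det_eq_of_apply_eq fun i j hji => ?_,
    isMaxOn_iff.mpr fun Y hY => ?_, μ, hB⟩
  · simp [Φ, φ, sutProjLinear_apply, sutProj_single_of_le hji, trace_mul_single]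
  · rw [hB, hB]
    exact hμ Y hY

/-- Let `A` be diagonal with `det A ≠ 0` and `σ` in the interior of the
projection of the operator norm ball onto the strictly upper triangular
entries. Then `⟨A, ·⟩` has a unique maximizer over
`{X ∈ B_op(n) : π_T(X) = σ}`; this maximizer is orthogonal, and special
orthogonal if moreover `det A > 0`. -/
theorem unique_orthogonal_maximizer_sut (n : ℕ)
    (A : Matrix (Fin n) (Fin n) ℝ) (hdiagA : ∀ i j : Fin n, i ≠ j → A i j = 0)
    (hdet : A.det ≠ 0)
    (σ : {q : Fin n × Fin n // q.1 < q.2} → ℝ)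
    (hσ : σ ∈ interior (sutProj '' opNormBall n)) :
    (∃! X : Matrix (Fin n) (Fin n) ℝ,
      X ∈ opNormBall n ∧ sutProj X = σ ∧
        ∀ Y ∈ opNormBall n, sutProj Y = σ → (Aᵀ * Y).trace ≤ (Aᵀ * X).trace) ∧
    (∀ X : Matrix (Fin n) (Fin n) ℝ,
      (X ∈ opNormBall n ∧ sutProj X = σ ∧
        ∀ Y ∈ opNormBall n, sutProj Y = σ → (Aᵀ * Y).trace ≤ (Aᵀ * X).trace) →
      Xᵀ * X = 1 ∧ (0 < A.det → X.det = 1)) := by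
  rw [opNormBall_eq_closedBall] at hσ ⊢
  obtain ⟨X₁, hX₁, hX₁σ⟩ := interior_subset hσ
  obtain ⟨X₀, ⟨hX₀, hX₀σ : sutProj X₀ = σ⟩, hX₀max⟩ :=
    ((isCompact_closedBall 0 1).inter_right
      (isClosed_singleton.preimage (sutProjLinear n).continuous_of_finiteDimensional)).exists_isMaxOn
      ⟨X₁, hX₁, hX₁σ⟩
      (traceLinearMap _ ℝ ℝ ∘ₗ LinearMap.mulLeft ℝ Aᵀ).continuous_of_finiteDimensional.continuousOn
  subst hX₀σ
  obtain ⟨B, hBA, hBmax, μ, hB⟩ := exists_lagrangian_of_sutProj_constrained_max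
    (fun i j hji => hdiagA i j hji.ne') hσ fun Y hY hYσ => hX₀max ⟨hY, hYσ⟩
  obtain ⟨Q, hQQ, hQdet, hQ⟩ := exists_orthogonal_unique_maximizer_trace (hBA ▸ hdet)
  have huniq : ∀ X ∈ Metric.closedBall 0 1, sutProj X = sutProj X₀ →
      (Aᵀ * X₀).trace ≤ (Aᵀ * X).trace → X = Q := by
    refine fun X hX hXσ hAX => hQ X hX (isMaxOn_iff.mpr fun Y hY => ?_)
    have := isMaxOn_iff.mp hBmax Y hY
    simp only [hB, hXσ] at this ⊢
    linarith
  have hX₀Q : X₀ = Q := huniq X₀ hX₀ rfl le_rfl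
  refine ⟨⟨X₀, ⟨hX₀, rfl, fun Y hY hYσ => hX₀max ⟨hY, hYσ⟩⟩, fun X ⟨hX, hXσ, hXmax⟩ =>
    (huniq X hX hXσ (hXmax X₀ hX₀ rfl)).trans hX₀Q.symm⟩, fun X ⟨hX, hXσ, hXmax⟩ => ?_⟩
  obtain rfl := huniq X hX hXσ (hXmax X₀ hX₀ rfl)
  exact ⟨hQQ, fun h => hQdet (hBA ▸ h)⟩
end

section
/- Let A be a symmetric positive definite n×n matrix and σ in the interior of π_T(B_op(A)). Then the set {X ∈ ℝ^{n×n} : XᵀX = A, π_T(X) = σ} has exactly 2^n elements, and no two of these matrices agree on all their diagonal entries. -/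
/-!
Peel off the first row and column: write `X = !![t, s; w, Y]`. The condition `π_T(X) = σ`
fixes `s` and the strictly upper part of `Y`, and `Xᵀ X = A` splits into
`Yᵀ Y = A' - s sᵀ`, `t s + Yᵀ w = a` and `t² + |w|² = A₀₀`, where `A'` is the lower block of `A`
and `a` the rest of its first row. For invertible `Y` the middle equation makes `w` an affine
function of `t`, so the last one is a quadratic equation in `t` with positive leading
coefficient. Positivity of the Schur complement `A₀₀ - aᵀ A'⁻¹ a` provides a `t` with
`t² + |w|² < A₀₀`, so the equation has exactly two roots: every admissible `Y` extends in exactly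
two ways, distinguished by the corner `t`. Strict feasibility `A - X₀ᵀ X₀ ≻ 0` passes to the
lower blocks, so induction gives `2ⁿ` solutions, each determined by its diagonal. An interior
point `σ` of `π_T(B_op(A))` is strictly feasible: shrink a witness for `t • σ`, `t > 1`, by `t⁻¹`.
-/

open Matrix

/-- The generalized operator norm ball `B_op(A) = {X : Xᵀ X ⪯ A}`. -/
def genOpNormBall {n : ℕ} (A : Matrix (Fin n) (Fin n) ℝ) :
    Set (Matrix (Fin n) (Fin n) ℝ) :=
  {X | (A - Xᵀ * X).PosSemidef}

theorem Set.ncard_eq_mul_of_ncard_fiber {α β : Type*} {f : α → β} {s : Set α} {t : Set β}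
    (hf : Set.MapsTo f s t) (ht : t.Finite) {k : ℕ} (hk : k ≠ 0)
    (hfiber : ∀ b ∈ t, {a ∈ s | f a = b}.ncard = k) : s.ncard = k * t.ncard := by
  classical
  have hs : s.Finite := by
    refine (ht.biUnion fun b hb => Set.finite_of_ncard_ne_zero (s := {a ∈ s | f a = b}) ?_).subset
      fun a ha => Set.mem_biUnion (hf ha) ⟨ha, rfl⟩
    rw [hfiber b hb]
    exact hk
  rw [Set.ncard_eq_toFinset_card s hs, Set.ncard_eq_toFinset_card t ht,
    Finset.card_eq_sum_card_fiberwise (f := f) (t := ht.toFinset) (by simpa using hf),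
    Finset.sum_const_nat fun b hb => ?_, mul_comm]
  rw [← hfiber b (by simpa using hb), ← Set.ncard_coe_finset]
  congr 1
  ext
  simp

theorem ncard_setOf_quadratic_eq_zero {a b c : ℝ} (ha : 0 < a)
    (h : ∃ x, a * (x * x) + b * x + c < 0) : {x | a * (x * x) + b * x + c = 0}.ncard = 2 := by
  obtain ⟨x₀, hx₀⟩ := h
  have hd : 0 < discrim a b c := by
    rw [discrim]
    nlinarith [sq_nonneg (2 * a * x₀ + b)]
  have hroots : {x | a * (x * x) + b * x + c = 0} =
      {(-b + √(discrim a b c)) / (2 * a), (-b - √(discrim a b c)) / (2 * a)} := by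
    ext x
    exact quadratic_eq_zero_iff ha.ne' (Real.mul_self_sqrt hd.le).symm x
  rw [hroots, Set.ncard_pair]
  have := Real.sqrt_pos.2 hd
  intro h
  field_simp at h
  linarith

theorem ncard_setOf_mul_self_add_dotProduct_eq {ι : Type*} [Fintype ι] {p r : ι → ℝ} {a : ℝ}
    (h : ∃ t, t * t + (p - t • r) ⬝ᵥ (p - t • r) < a) :
    {t | t * t + (p - t • r) ⬝ᵥ (p - t • r) = a}.ncard = 2 := by
  have hexpand : ∀ t : ℝ, t * t + (p - t • r) ⬝ᵥ (p - t • r) - a =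
      (1 + r ⬝ᵥ r) * (t * t) + -2 * (p ⬝ᵥ r) * t + (p ⬝ᵥ p - a) := by
    intro t
    simp only [dotProduct_sub, sub_dotProduct, dotProduct_smul, smul_dotProduct, smul_eq_mul,
      dotProduct_comm r p]
    ring
  simp_rw [← sub_eq_zero (b := a), hexpand]
  refine ncard_setOf_quadratic_eq_zero ?_ ?_
  · have := dotProduct_star_self_nonneg r
    rw [star_trivial] at this
    linarith
  · obtain ⟨t, ht⟩ := h
    exact ⟨t, by rw [← hexpand]; linarith⟩

namespace Matrix

theorem PosDef.of_sub_transpose_mul_self {n : Type*} [Fintype n] {A X : Matrix n n ℝ}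
    (h : (A - Xᵀ * X).PosDef) : A.PosDef := by
  have := h.add_posSemidef (by simpa using posSemidef_conjTranspose_mul_self X)
  rwa [sub_add_cancel] at this

theorem isUnit_det_of_posDef_transpose_mul_self {n : Type*} [Fintype n] [DecidableEq n]
    {X : Matrix n n ℝ} (h : (Xᵀ * X).PosDef) : IsUnit X.det := by
  have := (isUnit_iff_isUnit_det _).1 h.isUnit
  rw [det_mul, det_transpose] at this
  exact isUnit_of_mul_isUnit_left this

theorem eq_vecMul_nonsing_inv_iff {m R : Type*} [Fintype m] [DecidableEq m] [CommRing R]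
    {Y : Matrix m m R} (hY : IsUnit Y.det) {w d : m → R} : w = d ᵥ* Y⁻¹ ↔ w ᵥ* Y = d := by
  constructor <;> rintro rfl <;> rw [vecMul_vecMul]
  · rw [nonsing_inv_mul _ hY, vecMul_one]
  · rw [mul_nonsing_inv _ hY, vecMul_one]

variable {α : Type*} {n : ℕ}

/-- The block matrix `!![t, s; w, Y]`: `s` is the first row and `w` the first column, both
without the corner `t`. -/

def border (t : α) (s w : Fin n → α) (Y : Matrix (Fin n) (Fin n) α) :
    Matrix (Fin (n + 1)) (Fin (n + 1)) α :=
  of (vecCons (vecCons t s) fun i => vecCons (w i) (Y i))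

section border

variable (t : α) (s w : Fin n → α) (Y : Matrix (Fin n) (Fin n) α) (i j : Fin n)

@[simp] theorem border_zero_zero : border t s w Y 0 0 = t := rfl
@[simp] theorem border_zero_succ : border t s w Y 0 j.succ = s j := rfl
@[simp] theorem border_succ_zero : border t s w Y i.succ 0 = w i := rfl
@[simp] theorem border_succ_succ : border t s w Y i.succ j.succ = Y i j := rfl

@[simp] theorem submatrix_border : (border t s w Y).submatrix Fin.succ Fin.succ = Y := rfl

end border

theorem border_eta (X : Matrix (Fin (n + 1)) (Fin (n + 1)) α) :
    border (X 0 0) (fun j => X 0 j.succ) (fun i => X i.succ 0) (X.submatrix Fin.succ Fin.succ) =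
      X := by
  ext i j
  cases i using Fin.cases <;> cases j using Fin.cases <;> rfl

theorem border_inj {t t' : α} {s s' w w' : Fin n → α} {Y Y' : Matrix (Fin n) (Fin n) α} :
    border t s w Y = border t' s' w' Y' ↔ t = t' ∧ s = s' ∧ w = w' ∧ Y = Y' := by
  refine ⟨fun h => ⟨congr($h 0 0), ?_, ?_, ?_⟩, by rintro ⟨rfl, rfl, rfl, rfl⟩; rfl⟩
  · exact funext fun j => congr($h 0 j.succ)
  · exact funext fun i => congr($h i.succ 0)
  · exact ext fun i j => congr($h i.succ j.succ)

theorem transpose_mul_self_border [CommRing α] (t : α) (s w : Fin n → α)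
    (Y : Matrix (Fin n) (Fin n) α) :
    (border t s w Y)ᵀ * border t s w Y =
      border (t * t + w ⬝ᵥ w) (t • s + w ᵥ* Y) (t • s + w ᵥ* Y) (vecMulVec s s + Yᵀ * Y) := by
  ext i j
  cases i using Fin.cases <;> cases j using Fin.cases <;>
    simp [mul_apply, Fin.sum_univ_succ, dotProduct, vecMul, vecMulVec, mul_comm]

theorem border_mulVec_cons [CommRing α] (a : α) (c d : Fin n → α) (M : Matrix (Fin n) (Fin n) α)
    (x : α) (y : Fin n → α) :
    border a c d M *ᵥ vecCons x y = vecCons (a * x + c ⬝ᵥ y) (x • d + M *ᵥ y) := by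
  ext i
  cases i using Fin.cases <;>
    simp [border, mulVec, mul_comm]

theorem IsSymm.eq_border {A : Matrix (Fin (n + 1)) (Fin (n + 1)) α} (hA : A.IsSymm) :
    A = border (A 0 0) (fun j => A 0 j.succ) (fun j => A 0 j.succ)
      (A.submatrix Fin.succ Fin.succ) := by
  conv_lhs => rw [← border_eta A]
  congr 1
  exact funext fun i => hA.apply 0 i.succ

theorem PosDef.dotProduct_lt_apply_zero_zero {A : Matrix (Fin (n + 1)) (Fin (n + 1)) ℝ}
    (hA : A.PosDef) {β : Fin n → ℝ}
    (hβ : A.submatrix Fin.succ Fin.succ *ᵥ β = fun j => A 0 j.succ) :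
    β ⬝ᵥ (fun j => A 0 j.succ) < A 0 0 := by
  have hpos := hA.dotProduct_mulVec_pos (x := vecCons 1 (-β)) (by simp)
  rw [(isHermitian_iff_isSymm.1 hA.isHermitian).eq_border, border_mulVec_cons, mulVec_neg, hβ]
    at hpos
  simpa [cons_dotProduct_cons, dotProduct_comm] using hpos

-- `(s ⬝ᵥ β, Y *ᵥ β)` is `B *ᵥ β` for the block column `B = [s; Y]`, and `Bᵀ * B` is the lower
-- block of `A`; solving that block against the rest of the first row of `A` gives the point.
theorem PosDef.exists_mul_self_add_dotProduct_lt {A : Matrix (Fin (n + 1)) (Fin (n + 1)) ℝ}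
    (hA : A.PosDef) {s : Fin n → ℝ} {Y : Matrix (Fin n) (Fin n) ℝ}
    (hY : vecMulVec s s + Yᵀ * Y = A.submatrix Fin.succ Fin.succ) :
    ∃ t w, t • s + w ᵥ* Y = (fun j => A 0 j.succ) ∧ t * t + w ⬝ᵥ w < A 0 0 := by
  have hA' := hA.submatrix (Fin.succ_injective n)
  obtain ⟨β, hβ⟩ := mulVec_surjective_iff_isUnit.2 hA'.isUnit fun j => A 0 j.succ
  have hlin : (s ⬝ᵥ β) • s + (Y *ᵥ β) ᵥ* Y = fun j => A 0 j.succ := by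
    rw [← hβ, ← hY, add_mulVec, vecMulVec_mulVec, ← mulVec_mulVec, mulVec_transpose,
      op_smul_eq_smul]
  refine ⟨s ⬝ᵥ β, Y *ᵥ β, hlin, ?_⟩
  calc (s ⬝ᵥ β) * (s ⬝ᵥ β) + (Y *ᵥ β) ⬝ᵥ (Y *ᵥ β) = β ⬝ᵥ fun j => A 0 j.succ := by
        rw [← hlin, dotProduct_add, dotProduct_smul, smul_eq_mul, dotProduct_comm β s,
          dotProduct_comm β, ← dotProduct_mulVec]
    _ < A 0 0 := hA.dotProduct_lt_apply_zero_zero hβ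

end Matrix

section SutFiber

variable {n : ℕ}

def sutFiber (A : Matrix (Fin n) (Fin n) ℝ) (σ : {q : Fin n × Fin n // q.1 < q.2} → ℝ) :
    Set (Matrix (Fin n) (Fin n) ℝ) :=
  {X | Xᵀ * X = A ∧ sutProj X = σ}

def sutHead (σ : {q : Fin (n + 1) × Fin (n + 1) // q.1 < q.2} → ℝ) : Fin n → ℝ :=
  fun j => σ ⟨(0, j.succ), j.succ_pos⟩

def sutTail (σ : {q : Fin (n + 1) × Fin (n + 1) // q.1 < q.2} → ℝ) :
    {q : Fin n × Fin n // q.1 < q.2} → ℝ :=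
  fun q => σ ⟨(q.1.1.succ, q.1.2.succ), Fin.succ_lt_succ_iff.2 q.2⟩

theorem sutProj_smul (c : ℝ) (X : Matrix (Fin n) (Fin n) ℝ) : sutProj (c • X) = c • sutProj X :=
  rfl

theorem sutProj_submatrix (X : Matrix (Fin (n + 1)) (Fin (n + 1)) ℝ) :
    sutProj (X.submatrix Fin.succ Fin.succ) = sutTail (sutProj X) :=
  rfl

theorem exists_posDef_sub_transpose_mul_self_of_mem_interior
    {A : Matrix (Fin n) (Fin n) ℝ} (hA : A.PosDef) {σ : {q : Fin n × Fin n // q.1 < q.2} → ℝ}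
    (hσ : σ ∈ interior (sutProj '' genOpNormBall A)) :
    ∃ X₀, sutProj X₀ = σ ∧ (A - X₀ᵀ * X₀).PosDef := by
  have hev : ∀ᶠ t : ℝ in nhds 1, t • σ ∈ sutProj '' genOpNormBall A :=
    (continuous_id.smul continuous_const).continuousAt.preimage_mem_nhds
      (by simpa using mem_interior_iff_mem_nhds.1 hσ)
  obtain ⟨t, ht, X, hX : (A - Xᵀ * X).PosSemidef, hXσ⟩ := hev.exists_gt
  have ht0 : 0 < t := by linarith
  refine ⟨t⁻¹ • X, by rw [sutProj_smul, hXσ, inv_smul_smul₀ ht0.ne'], ?_⟩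
  have hsq : t⁻¹ ^ 2 < 1 := pow_lt_one₀ (by positivity) (inv_lt_one_of_one_lt₀ ht) two_ne_zero
  have hsplit : A - (t⁻¹ • X)ᵀ * (t⁻¹ • X) = t⁻¹ ^ 2 • (A - Xᵀ * X) + (1 - t⁻¹ ^ 2) • A := by
    rw [transpose_smul, smul_mul_smul_comm]
    module
  rw [hsplit]
  exact .posSemidef_add (hX.smul (by positivity)) (hA.smul (by linarith))

theorem sutProj_border_eq_iff {t : ℝ} {s w : Fin n → ℝ} {Y : Matrix (Fin n) (Fin n) ℝ}
    {σ : {q : Fin (n + 1) × Fin (n + 1) // q.1 < q.2} → ℝ} :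
    sutProj (border t s w Y) = σ ↔ s = sutHead σ ∧ sutProj Y = sutTail σ := by
  refine ⟨by rintro rfl; exact ⟨rfl, rfl⟩, ?_⟩
  rintro ⟨rfl, hY⟩
  funext ⟨⟨i, j⟩, hij⟩
  cases j using Fin.cases with
  | zero => exact absurd hij (Fin.not_lt_zero i)
  | succ j =>
    cases i using Fin.cases with
    | zero => rfl
    | succ i => exact congrFun hY ⟨(i, j), Fin.succ_lt_succ_iff.1 hij⟩

theorem border_mem_sutFiber_iff {A : Matrix (Fin (n + 1)) (Fin (n + 1)) ℝ} (hA : A.IsSymm)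
    {σ : {q : Fin (n + 1) × Fin (n + 1) // q.1 < q.2} → ℝ} {t : ℝ} {s w : Fin n → ℝ}
    {Y : Matrix (Fin n) (Fin n) ℝ} :
    border t s w Y ∈ sutFiber A σ ↔
      (t * t + w ⬝ᵥ w = A 0 0 ∧ t • s + w ᵥ* Y = fun j => A 0 j.succ) ∧ s = sutHead σ ∧
        Y ∈ sutFiber (A.submatrix Fin.succ Fin.succ - vecMulVec s s) (sutTail σ) := by
  conv_lhs => rw [sutFiber, Set.mem_ofPred_eq, hA.eq_border, transpose_mul_self_border, border_inj,
    sutProj_border_eq_iff]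
  rw [sutFiber, Set.mem_ofPred_eq, eq_sub_iff_add_eq']
  tauto

theorem submatrix_sub_transpose_mul_self_eq {A X : Matrix (Fin (n + 1)) (Fin (n + 1)) ℝ} :
    (A - Xᵀ * X).submatrix Fin.succ Fin.succ =
      A.submatrix Fin.succ Fin.succ - vecMulVec (sutHead (sutProj X)) (sutHead (sutProj X)) -
        (X.submatrix Fin.succ Fin.succ)ᵀ * X.submatrix Fin.succ Fin.succ := by
  ext i j
  simp [mul_apply, Fin.sum_univ_succ, sutHead, sutProj, vecMulVec]
  ring

theorem submatrix_mem_sutFiber {A X : Matrix (Fin (n + 1)) (Fin (n + 1)) ℝ}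
    {σ : {q : Fin (n + 1) × Fin (n + 1) // q.1 < q.2} → ℝ} (hX : X ∈ sutFiber A σ) :
    X.submatrix Fin.succ Fin.succ ∈
      sutFiber (A.submatrix Fin.succ Fin.succ - vecMulVec (sutHead σ) (sutHead σ)) (sutTail σ) := by
  obtain ⟨hXA, rfl⟩ := hX
  refine ⟨?_, rfl⟩
  have h := submatrix_sub_transpose_mul_self_eq (A := A) (X := X)
  rw [hXA, sub_self, submatrix_zero] at h
  exact (sub_eq_zero.1 h.symm).symm

end SutFiber

section Completion

variable {n : ℕ} {A : Matrix (Fin (n + 1)) (Fin (n + 1)) ℝ}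

variable (A) in
/-- For invertible `Y`, the only candidate in `sutFiber A σ` with lower block `Y` and corner `t`:
its first column `w` is forced by `t • sutHead σ + w ᵥ* Y = fun j => A 0 j.succ`. -/
noncomputable def sutCompletion (σ : {q : Fin (n + 1) × Fin (n + 1) // q.1 < q.2} → ℝ)
    (Y : Matrix (Fin n) (Fin n) ℝ) (t : ℝ) : Matrix (Fin (n + 1)) (Fin (n + 1)) ℝ :=
  border t (sutHead σ) (((fun j => A 0 j.succ) - t • sutHead σ) ᵥ* Y⁻¹) Y

variable {σ : {q : Fin (n + 1) × Fin (n + 1) // q.1 < q.2} → ℝ}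

theorem sutCompletion_injective (Y : Matrix (Fin n) (Fin n) ℝ) :
    Function.Injective (sutCompletion A σ Y) :=
  fun _ _ h => (border_inj.1 h).1

theorem eq_sutCompletion (hA : A.IsSymm) {X : Matrix (Fin (n + 1)) (Fin (n + 1)) ℝ}
    (hX : X ∈ sutFiber A σ) (hdet : IsUnit (X.submatrix Fin.succ Fin.succ).det) :
    X = sutCompletion A σ (X.submatrix Fin.succ Fin.succ) (X 0 0) := by
  rw [← border_eta X, border_mem_sutFiber_iff hA] at hX
  obtain ⟨⟨-, hlin⟩, hs, -⟩ := hX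
  conv_lhs => rw [← border_eta X]
  rw [sutCompletion, border_inj, eq_vecMul_nonsing_inv_iff hdet, ← hlin, ← hs, add_sub_cancel_left]
  exact ⟨rfl, rfl, rfl, rfl⟩

theorem sutCompletion_mem_sutFiber_iff (hA : A.IsSymm) {Y : Matrix (Fin n) (Fin n) ℝ}
    (hY : Y ∈ sutFiber (A.submatrix Fin.succ Fin.succ - vecMulVec (sutHead σ) (sutHead σ))
      (sutTail σ)) (hdet : IsUnit Y.det) {t : ℝ} :
    sutCompletion A σ Y t ∈ sutFiber A σ ↔
      ((sutCompletion A σ Y t)ᵀ * sutCompletion A σ Y t) 0 0 = A 0 0 := by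
  have hlin : t • sutHead σ + (((fun j => A 0 j.succ) - t • sutHead σ) ᵥ* Y⁻¹) ᵥ* Y =
      fun j => A 0 j.succ := by
    rw [vecMul_vecMul, nonsing_inv_mul _ hdet, vecMul_one, add_sub_cancel]
  rw [sutCompletion, border_mem_sutFiber_iff hA, transpose_mul_self_border, border_zero_zero]
  simp only [hlin, hY, and_true]

theorem ncard_sutFiber_submatrix_eq (hA : A.PosDef) {Y : Matrix (Fin n) (Fin n) ℝ}
    (hY : Y ∈ sutFiber (A.submatrix Fin.succ Fin.succ - vecMulVec (sutHead σ) (sutHead σ))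
      (sutTail σ)) (hdet : IsUnit Y.det) :
    {X ∈ sutFiber A σ | X.submatrix Fin.succ Fin.succ = Y}.ncard = 2 := by
  have hAs := isHermitian_iff_isSymm.1 hA.isHermitian
  have hfiber : {X ∈ sutFiber A σ | X.submatrix Fin.succ Fin.succ = Y} =
      sutCompletion A σ Y '' {t | sutCompletion A σ Y t ∈ sutFiber A σ} := by
    ext X
    constructor
    · rintro ⟨hX, rfl⟩
      have hXeq := eq_sutCompletion hAs hX hdet
      exact ⟨X 0 0, hXeq ▸ hX, hXeq.symm⟩
    · rintro ⟨t, ht, rfl⟩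
      exact ⟨ht, submatrix_border ..⟩
  rw [hfiber, Set.ncard_image_of_injective _ (sutCompletion_injective Y)]
  simp_rw [sutCompletion_mem_sutFiber_iff hAs hY hdet, sutCompletion, transpose_mul_self_border,
    border_zero_zero, sub_vecMul, smul_vecMul]
  apply ncard_setOf_mul_self_add_dotProduct_eq
  obtain ⟨t, w, hlin, hlt⟩ := hA.exists_mul_self_add_dotProduct_lt (eq_sub_iff_add_eq'.1 hY.1)
  refine ⟨t, ?_⟩
  rwa [← smul_vecMul, ← sub_vecMul, ← (eq_vecMul_nonsing_inv_iff hdet).2 (eq_sub_of_add_eq' hlin)]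

end Completion

theorem ncard_sutFiber_eq_two_pow_and_injOn_diag {n : ℕ} {A X₀ : Matrix (Fin n) (Fin n) ℝ}
    (hX₀ : (A - X₀ᵀ * X₀).PosDef) :
    (sutFiber A (sutProj X₀)).ncard = 2 ^ n ∧ Set.InjOn diag (sutFiber A (sutProj X₀)) := by
  induction n with
  | zero =>
    have hfiber : sutFiber A (sutProj X₀) = {X₀} :=
      Set.eq_singleton_iff_unique_mem.2
        ⟨⟨Subsingleton.elim _ _, rfl⟩, fun X _ => Subsingleton.elim _ _⟩
    exact ⟨by rw [hfiber, Set.ncard_singleton, pow_zero], fun X _ Y _ _ => Subsingleton.elim X Y⟩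
  | succ n ih =>
    have hA := hX₀.of_sub_transpose_mul_self
    have hAs := isHermitian_iff_isSymm.1 hA.isHermitian
    have hX₀' := hX₀.submatrix (Fin.succ_injective n)
    rw [submatrix_sub_transpose_mul_self_eq] at hX₀'
    obtain ⟨hcard, hinj⟩ := ih hX₀'
    rw [sutProj_submatrix] at hcard hinj
    have hdet : ∀ Y ∈ sutFiber _ (sutTail (sutProj X₀)), IsUnit (Matrix.det Y) :=
      fun Y hY => isUnit_det_of_posDef_transpose_mul_self (hY.1 ▸ hX₀'.of_sub_transpose_mul_self)
    refine ⟨?_, fun X hX X' hX' hdiag => ?_⟩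
    · rw [Set.ncard_eq_mul_of_ncard_fiber (fun X hX => submatrix_mem_sutFiber hX)
        (Set.finite_of_ncard_ne_zero (by rw [hcard]; positivity)) two_ne_zero
        fun Y hY => ncard_sutFiber_submatrix_eq hA hY (hdet Y hY), hcard, pow_succ']
    · have hY := submatrix_mem_sutFiber hX
      have hY' := submatrix_mem_sutFiber hX'
      have hsub := hinj hY hY' (funext fun i => congr_fun hdiag i.succ)
      have hcorner : X 0 0 = X' 0 0 := congr_fun hdiag 0
      rw [eq_sutCompletion hAs hX (hdet _ hY), eq_sutCompletion hAs hX' (hdet _ hY'), hsub, hcorner]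

/-- For `A` positive definite and `σ` in the interior of `π_T(B_op(A))`, the
set `{X : Xᵀ X = A, π_T(X) = σ}` has exactly `2^n` elements, no two of which
agree on all diagonal entries. -/
theorem card_fiber_sut_eq_two_pow (n : ℕ)
    (A : Matrix (Fin n) (Fin n) ℝ) (hA : A.PosDef)
    (σ : {q : Fin n × Fin n // q.1 < q.2} → ℝ)
    (hσ : σ ∈ interior (sutProj '' genOpNormBall A)) :
    ({X : Matrix (Fin n) (Fin n) ℝ | Xᵀ * X = A ∧ sutProj X = σ}.ncard = 2 ^ n) ∧
    Set.InjOn (fun X : Matrix (Fin n) (Fin n) ℝ => Matrix.diag X)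
      {X | Xᵀ * X = A ∧ sutProj X = σ} := by
  obtain ⟨X₀, rfl, hX₀⟩ := exists_posDef_sub_transpose_mul_self_of_mem_interior hA hσ
  exact ncard_sutFiber_eq_two_pow_and_injOn_diag hX₀
end
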